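/- Let G be a finite simple graph of order n ≥ 2 with no isolated vertices. Then γ(M(G)) = ρ(G), where γ denotes the domination number and ρ(G) is the edge cover number of G. -/

import Mathlib

/-- `S` is a dominating set of the graph `H`. -/
def IsDomSet {V : Type*} (H : SimpleGraph V) (S : Set V) : Prop :=
  ∀ v : V, v ∈ S ∨ ∃ s ∈ S, H.Adj v s

/-- The domination number of a graph `H`. -/
noncomputable def domNum {V : Type*} (H : SimpleGraph V) : ℕ :=
  sInf {k : ℕ | ∃ S : Set V, IsDomSet H S ∧ S.ncard = k}

/-- The middle graph `M(G)` of a graph `G`: its vertices are the vertices and edges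
of `G`; a vertex is adjacent to the edges incident to it, and two edges are adjacent
iff they are distinct and share an endpoint. -/
def middleGraph {V : Type*} (G : SimpleGraph V) : SimpleGraph (V ⊕ G.edgeSet) where
  Adj x y :=
    match x, y with
    | Sum.inl _, Sum.inl _ => False
    | Sum.inl v, Sum.inr e => v ∈ (e : Sym2 V)
    | Sum.inr e, Sum.inl v => v ∈ (e : Sym2 V)
    | Sum.inr e, Sum.inr f => e ≠ f ∧ ∃ v, v ∈ (e : Sym2 V) ∧ v ∈ (f : Sym2 V)
  symm := by
    constructor
    rintro (v | e) (w | f) h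
    · exact h.elim
    · exact h
    · exact h
    · exact ⟨Ne.symm h.1, h.2.imp fun v hv => ⟨hv.2, hv.1⟩⟩
  loopless := by
    constructor
    rintro (v | e) h
    · exact h.elim
    · exact h.1 rfl

/-- The edge cover number of a graph `G`. -/
noncomputable def edgeCoverNum {V : Type*} (G : SimpleGraph V) : ℕ :=
  sInf {k : ℕ | ∃ S : Set (Sym2 V), S ⊆ G.edgeSet ∧ (∀ v : V, ∃ e ∈ S, v ∈ e) ∧ S.ncard = k}

/-!
A minimum edge cover `S` of `G` gives a dominating set of `M(G)` of the same size: every vertex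
of `G` lies on an edge of `S`, and an edge of `G` outside `S` shares an endpoint with some edge
of `S`. Conversely, replacing each vertex `v` of a dominating set of `M(G)` by some edge at `v`
(there is one since `v` is not isolated) and keeping its edges gives an edge cover that is no
larger, because a vertex of `G` is dominated in `M(G)` only by itself or by the edges at it.
-/

section

variable {V : Type*} {G : SimpleGraph V}

def IsEdgeCover (G : SimpleGraph V) (S : Set (Sym2 V)) : Prop :=
  S ⊆ G.edgeSet ∧ ∀ v : V, ∃ e ∈ S, v ∈ e

theorem isEdgeCover_edgeSet (hiso : ∀ v : V, ∃ w : V, G.Adj v w) : IsEdgeCover G G.edgeSet :=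
  ⟨subset_rfl, fun v =>
    let ⟨w, hw⟩ := hiso v
    ⟨s(v, w), G.mem_edgeSet.mpr hw, Sym2.mem_mk_left v w⟩⟩

theorem edgeCoverNum_le_ncard {S : Set (Sym2 V)} (hS : IsEdgeCover G S) :
    edgeCoverNum G ≤ S.ncard :=
  Nat.sInf_le ⟨S, hS.1, hS.2, rfl⟩

theorem exists_isEdgeCover_ncard_eq_edgeCoverNum (hiso : ∀ v : V, ∃ w : V, G.Adj v w) :
    ∃ S, IsEdgeCover G S ∧ S.ncard = edgeCoverNum G := by
  have hcover := isEdgeCover_edgeSet hiso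
  obtain ⟨S, hSE, hScov, hS⟩ : edgeCoverNum G ∈ _ :=
    Nat.sInf_mem ⟨_, G.edgeSet, hcover.1, hcover.2, rfl⟩
  exact ⟨S, ⟨hSE, hScov⟩, hS⟩

theorem domNum_le_ncard {H : SimpleGraph V} {S : Set V} (hS : IsDomSet H S) :
    domNum H ≤ S.ncard :=
  Nat.sInf_le ⟨S, hS, rfl⟩

theorem exists_isDomSet_ncard_eq_domNum (H : SimpleGraph V) :
    ∃ S, IsDomSet H S ∧ S.ncard = domNum H :=
  Nat.sInf_mem (s := {k | ∃ S : Set V, IsDomSet H S ∧ S.ncard = k})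
    ⟨_, Set.univ, fun _ => Or.inl trivial, rfl⟩

theorem IsEdgeCover.isDomSet_middleGraph {S : Set (Sym2 V)} (hS : IsEdgeCover G S) :
    IsDomSet (middleGraph G) (Sum.inr '' (Subtype.val ⁻¹' S)) := by
  rintro (v | e)
  · obtain ⟨f, hfS, hvf⟩ := hS.2 v
    exact Or.inr ⟨Sum.inr ⟨f, hS.1 hfS⟩, ⟨_, hfS, rfl⟩, hvf⟩
  · by_cases heS : (e : Sym2 V) ∈ S
    · exact Or.inl ⟨e, heS, rfl⟩
    obtain ⟨f, hfS, hvf⟩ := hS.2 (e : Sym2 V).out.1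
    refine Or.inr ⟨Sum.inr ⟨f, hS.1 hfS⟩, ⟨_, hfS, rfl⟩, fun hef => heS ?_, _,
      Sym2.out_fst_mem _, hvf⟩
    rwa [hef]

theorem IsEdgeCover.ncard_image_inr {S : Set (Sym2 V)} (hS : IsEdgeCover G S) :
    (Sum.inr '' (Subtype.val ⁻¹' S) : Set (V ⊕ G.edgeSet)).ncard = S.ncard := by
  rw [Set.ncard_image_of_injective _ Sum.inr_injective,
    Set.ncard_preimage_of_injective_subset_range Subtype.val_injective]
  rw [Subtype.range_coe]
  exact hS.1

theorem IsDomSet.isEdgeCover_image {D : Set (V ⊕ G.edgeSet)} (hD : IsDomSet (middleGraph G) D)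
    {w : V → V} (hw : ∀ v, G.Adj v (w v)) :
    IsEdgeCover G (Sum.elim (fun v => s(v, w v)) Subtype.val '' D) := by
  refine ⟨?_, fun v => ?_⟩
  · rintro _ ⟨v | e, -, rfl⟩
    · exact G.mem_edgeSet.mpr (hw v)
    · exact e.2
  rcases hD (Sum.inl v) with hv | ⟨v' | e, heD, hve⟩
  · exact ⟨_, ⟨_, hv, rfl⟩, Sym2.mem_mk_left _ _⟩
  · exact hve.elim
  · exact ⟨_, ⟨_, heD, rfl⟩, hve⟩

end

theorem domNum_middle_eq_edgeCoverNum_general {V : Type*} [Fintype V] (G : SimpleGraph V)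
    (hiso : ∀ v : V, ∃ w : V, G.Adj v w) :
    domNum (middleGraph G) = edgeCoverNum G := by
  refine le_antisymm ?_ ?_
  · obtain ⟨S, hS, hcard⟩ := exists_isEdgeCover_ncard_eq_edgeCoverNum hiso
    calc domNum (middleGraph G) ≤ _ := domNum_le_ncard hS.isDomSet_middleGraph
      _ = edgeCoverNum G := by rw [hS.ncard_image_inr, hcard]
  · choose w hw using hiso
    obtain ⟨D, hD, hcard⟩ := exists_isDomSet_ncard_eq_domNum (middleGraph G)
    calc edgeCoverNum G ≤ _ := edgeCoverNum_le_ncard (hD.isEdgeCover_image hw)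
      _ ≤ D.ncard := Set.ncard_image_le D.toFinite
      _ = domNum (middleGraph G) := hcard

/-- For a graph `G` of order `n ≥ 2` with no isolated vertex,
`γ(M(G)) = ρ(G)`, the edge cover number of `G`. -/
theorem domNum_middle_eq_edgeCoverNum {V : Type*} [Fintype V] (G : SimpleGraph V) (n : ℕ)
    (hord : Fintype.card V = n) (hn : 2 ≤ n)
    (hiso : ∀ v : V, ∃ w : V, G.Adj v w) :
    domNum (middleGraph G) = edgeCoverNum G :=
  domNum_middle_eq_edgeCoverNum_general G hiso
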